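/- Let q be a probability mass function on a finite type α, let m > 0, let (M_x)_{x ∈ α} be independent random variables with M_x distributed as Poisson(m · q_x), and let (h_x)_{x ∈ α} be independent random variables uniform on {−1, +1}, independent of (M_x). Let V = Σ_x h_x · M_x. Then Var[V²] ≤ 3m + 20m² + 16m³ · C(q) + 2m⁴ · C(q)², where C(q) = Σ_x q_x². -/

import Mathlib

/-
Write `V = ∑ₓ Wₓ` with `Wₓ = hₓ Mₓ`. The `Wₓ` are independent and centred, and `Wₓ² = Mₓ²`.
Hence `Var[V²] = κ(V) + 2 (E V²)²`, where `κ(Y) = E Y⁴ - 3 (E Y²)²` is the fourth cumulant of a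
centred `Y`; both `κ` and `E Y²` are additive over independent centred summands, because
expanding `(Y + Z)⁴` leaves only `E Y⁴ + 6 E Y² E Z² + E Z⁴`. For `M ~ Poisson(λ)` the factorial
moments `E[M (M - 1) ⋯ (M - k + 1)] = λᵏ` give `E M² = λ² + λ` and
`E M⁴ = λ⁴ + 6λ³ + 7λ² + λ`, so `κ(Wₓ) = λ + 4λ² - 2λ⁴` with `λ = m qₓ`. Summing over `x`,
`Var[V²] ≤ m + 4m²C + 2 (m²C + m)²`, and `C ≤ 1` finishes.
-/

open MeasureTheory ProbabilityTheory Finset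
open scoped NNReal ENNReal Nat

lemma hasSum_descFactorial_mul_pow_div_factorial (r : ℝ) (k : ℕ) :
    HasSum (fun n : ℕ => (n.descFactorial k : ℝ) * (r ^ n / n !)) (r ^ k * Real.exp r) := by
  have hshift (n : ℕ) : ((n + k).descFactorial k : ℝ) * (r ^ (n + k) / (n + k)!)
      = r ^ k * (r ^ n / n !) := by
    have hfac : (n ! : ℝ) * (n + k).descFactorial k = (n + k)! := by
      exact_mod_cast Nat.add_sub_cancel n k ▸ Nat.factorial_mul_descFactorial (Nat.le_add_left k n)
    rw [← hfac, pow_add]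
    field_simp
  rw [← hasSum_nat_add_iff' k, sum_eq_zero fun i hi => by
    simp [Nat.descFactorial_eq_zero_iff_lt.mpr (mem_range.mp hi)], sub_zero]
  simpa only [hshift, Real.exp_eq_exp_ℝ] using
    (NormedSpace.expSeries_div_hasSum_exp r).mul_left (r ^ k)

-- Stirling numbers of the second kind.
lemma natCast_sq_eq_descFactorial (n : ℕ) :
    (n : ℝ) ^ 2 = n.descFactorial 2 + n.descFactorial 1 := by
  rcases n with _ | n <;> simp [Nat.descFactorial_succ]; ring

lemma natCast_pow_four_eq_descFactorial (n : ℕ) :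
    (n : ℝ) ^ 4 = n.descFactorial 4 + 6 * n.descFactorial 3 + 7 * n.descFactorial 2
      + n.descFactorial 1 := by
  rcases n with _ | _ | _ | n <;> simp [Nat.descFactorial_succ] <;> ring

namespace MeasureTheory

variable {Ω : Type*} {mΩ : MeasurableSpace Ω} {μ : Measure Ω}

lemma MemLp.integrable_pow_of_le [IsFiniteMeasure μ] {X : Ω → ℝ} {p k : ℕ} (hX : MemLp X p μ)
    (hk : k ≤ p) : Integrable (fun ω => X ω ^ k) μ := by
  refine (integrable_norm_iff (hX.1.pow k)).1 ?_
  simpa [norm_pow] using (hX.mono_exponent (by exact_mod_cast hk)).integrable_norm_pow'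

lemma MemLp.mul_of_sq_eq_one {ε X : Ω → ℝ} {p : ℝ≥0∞} (hX : MemLp X p μ)
    (hε : AEStronglyMeasurable ε μ) (hε1 : ∀ ω, ε ω ^ 2 = 1) : MemLp (ε * X) p μ :=
  hX.congr_norm (hε.mul hX.1) (ae_of_all _ fun ω => by
    simp [(pow_eq_one_iff_of_nonneg (abs_nonneg (ε ω)) two_ne_zero).1 (by rw [sq_abs, hε1])])

end MeasureTheory

lemma mul_pow_of_sq_eq_one {Ω : Type*} {ε X : Ω → ℝ} (hε : ∀ ω, ε ω ^ 2 = 1) {k : ℕ}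
    (hk : Even k) : (ε * X) ^ k = X ^ k := by
  obtain ⟨j, rfl⟩ := hk
  ext ω
  simp [mul_pow, ← two_mul, pow_mul, hε]

namespace ProbabilityTheory

lemma hasSum_poissonMeasure_descFactorial (r : ℝ≥0) (k : ℕ) :
    HasSum (fun n : ℕ => Real.exp (-r) * r ^ n / n ! * (n.descFactorial k : ℝ)) (r ^ k) := by
  have h := (hasSum_descFactorial_mul_pow_div_factorial r k).mul_left (Real.exp (-r))
  rw [mul_left_comm, ← Real.exp_add, neg_add_cancel, Real.exp_zero, mul_one] at h
  exact h.congr_fun fun n => by ring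

lemma integrable_descFactorial_poissonMeasure (r : ℝ≥0) (k : ℕ) :
    Integrable (fun n : ℕ => (n.descFactorial k : ℝ)) Po(r) :=
  integrable_poissonMeasure_iff.2 <| by
    simpa using (hasSum_poissonMeasure_descFactorial r k).summable

lemma integral_descFactorial_poissonMeasure (r : ℝ≥0) (k : ℕ) :
    ∫ n, (n.descFactorial k : ℝ) ∂Po(r) = r ^ k :=
  (hasSum_integral_poissonMeasure (integrable_descFactorial_poissonMeasure r k)).unique
    (hasSum_poissonMeasure_descFactorial r k)

lemma integral_sq_poissonMeasure (r : ℝ≥0) : ∫ n, (n : ℝ) ^ 2 ∂Po(r) = r ^ 2 + r := by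
  simp_rw [natCast_sq_eq_descFactorial]
  rw [integral_add (integrable_descFactorial_poissonMeasure r 2)
    (integrable_descFactorial_poissonMeasure r 1)]
  simp only [integral_descFactorial_poissonMeasure, pow_one]

lemma integral_pow_four_poissonMeasure (r : ℝ≥0) :
    ∫ n, (n : ℝ) ^ 4 ∂Po(r) = r ^ 4 + 6 * r ^ 3 + 7 * r ^ 2 + r := by
  have hint := integrable_descFactorial_poissonMeasure r
  simp_rw [natCast_pow_four_eq_descFactorial]
  rw [integral_add (((hint 4).fun_add ((hint 3).const_mul 6)).fun_add ((hint 2).const_mul 7))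
    (hint 1), integral_add ((hint 4).fun_add ((hint 3).const_mul 6)) ((hint 2).const_mul 7),
    integral_add (hint 4) ((hint 3).const_mul 6), integral_const_mul, integral_const_mul]
  simp only [integral_descFactorial_poissonMeasure, pow_one]

lemma memLp_four_natCast_poissonMeasure (r : ℝ≥0) : MemLp (fun n : ℕ => (n : ℝ)) 4 Po(r) := by
  have hint := integrable_descFactorial_poissonMeasure r
  have h4 : Integrable (fun n : ℕ => ‖(n : ℝ)‖ ^ (4 : ℝ≥0∞).toReal) Po(r) := by
    simp_rw [Real.norm_natCast, ENNReal.toReal_ofNat, Real.rpow_ofNat,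
      natCast_pow_four_eq_descFactorial]
    exact (((hint 4).fun_add ((hint 3).const_mul 6)).fun_add ((hint 2).const_mul 7)).fun_add
      (hint 1)
  exact (integrable_norm_rpow_iff .of_discrete (by norm_num) (by norm_num)).1 h4

variable {Ω : Type*} {mΩ : MeasurableSpace Ω} {μ : Measure Ω}

lemma hasLaw_poissonMeasure_of_measure_eq {N : Ω → ℕ} (hN : Measurable N) {r : ℝ≥0}
    (hlaw : ∀ n : ℕ, μ {ω | N ω = n} = ENNReal.ofReal (Real.exp (-r) * r ^ n / n !)) :
    HasLaw N Po(r) μ where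
  aemeasurable := hN.aemeasurable
  map_eq := Measure.ext_iff_singleton.2 fun n => by
    rw [Measure.map_apply hN (measurableSet_singleton n), poissonMeasure_singleton, ← hlaw]
    rfl

section PoissonMoments
variable {N : Ω → ℕ} {r : ℝ≥0}

lemma HasLaw.memLp_four_natCast_of_poisson (hN : HasLaw N Po(r) μ) :
    MemLp (fun ω => (N ω : ℝ)) 4 μ :=
  (memLp_map_measure_iff .of_discrete hN.aemeasurable).1
    (hN.map_eq ▸ memLp_four_natCast_poissonMeasure r)

lemma HasLaw.integral_natCast_sq_of_poisson (hN : HasLaw N Po(r) μ) :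
    μ[fun ω => (N ω : ℝ) ^ 2] = (r : ℝ) ^ 2 + r :=
  (hN.integral_comp (f := fun n : ℕ => (n : ℝ) ^ 2) .of_discrete).trans
    (integral_sq_poissonMeasure r)

lemma HasLaw.integral_natCast_pow_four_of_poisson (hN : HasLaw N Po(r) μ) :
    μ[fun ω => (N ω : ℝ) ^ 4] = (r : ℝ) ^ 4 + 6 * r ^ 3 + 7 * r ^ 2 + r :=
  (hN.integral_comp (f := fun n : ℕ => (n : ℝ) ^ 4) .of_discrete).trans
    (integral_pow_four_poissonMeasure r)

end PoissonMoments

lemma IndepFun.integral_add_pow [IsFiniteMeasure μ] {X Y : Ω → ℝ} (hXY : IndepFun X Y μ) {n : ℕ}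
    (hX : MemLp X n μ) (hY : MemLp Y n μ) :
    μ[(X + Y) ^ n] = ∑ k ∈ range (n + 1), μ[X ^ k] * μ[Y ^ (n - k)] * (n.choose k : ℝ) := by
  have hind (k : ℕ) : IndepFun (X ^ k) (Y ^ (n - k)) μ :=
    hXY.comp (measurable_id.pow_const k) (measurable_id.pow_const (n - k))
  have hint (k : ℕ) (hk : k ∈ range (n + 1)) :
      Integrable (fun ω => X ω ^ k * Y ω ^ (n - k) * (n.choose k : ℝ)) μ :=
    ((hind k).integrable_mul (MemLp.integrable_pow_of_le hX (Nat.lt_succ_iff.1 (mem_range.1 hk)))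
      (MemLp.integrable_pow_of_le hY (Nat.sub_le n k))).mul_const _
  simp_rw [Pi.pow_apply, Pi.add_apply, add_pow]
  rw [integral_finsetSum _ hint]
  refine sum_congr rfl fun k _ => ?_
  rw [integral_mul_const]
  exact congrArg (· * _)
    ((hind k).integral_fun_mul_eq_mul_integral (hX.1.pow k) (hY.1.pow (n - k)))

lemma integral_finsetSum_of_integral_eq_zero {ι : Type*} {X : ι → Ω → ℝ} (s : Finset ι)
    (hX : ∀ i, Integrable (X i) μ) (h0 : ∀ i, μ[X i] = 0) : μ[∑ i ∈ s, X i] = 0 := by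
  simp_rw [Finset.sum_apply]
  rw [integral_finsetSum s fun i _ => hX i]
  exact sum_eq_zero fun i _ => h0 i

noncomputable def fourthCumulant (X : Ω → ℝ) (μ : Measure Ω) : ℝ := μ[X ^ 4] - 3 * μ[X ^ 2] ^ 2

section Centred
variable [IsProbabilityMeasure μ]

lemma IndepFun.integral_add_sq_of_integral_eq_zero {X Y : Ω → ℝ} (hXY : IndepFun X Y μ)
    (hX : MemLp X 2 μ) (hY : MemLp Y 2 μ) (hX0 : μ[X] = 0) (hY0 : μ[Y] = 0) :
    μ[(X + Y) ^ 2] = μ[X ^ 2] + μ[Y ^ 2] := by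
  rw [hXY.integral_add_pow (n := 2) (by simpa using hX) (by simpa using hY)]
  simp [sum_range_succ, hX0, hY0, add_comm]

lemma IndepFun.fourthCumulant_add {X Y : Ω → ℝ} (hXY : IndepFun X Y μ)
    (hX : MemLp X 4 μ) (hY : MemLp Y 4 μ) (hX0 : μ[X] = 0) (hY0 : μ[Y] = 0) :
    fourthCumulant (X + Y) μ = fourthCumulant X μ + fourthCumulant Y μ := by
  rw [fourthCumulant, hXY.integral_add_pow (n := 4) (by simpa using hX) (by simpa using hY),
    hXY.integral_add_sq_of_integral_eq_zero (hX.mono_exponent (by norm_num))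
      (hY.mono_exponent (by norm_num)) hX0 hY0]
  simp [sum_range_succ, fourthCumulant, hX0, hY0, Nat.choose]
  ring

lemma variance_sq_eq_fourthCumulant_add {X : Ω → ℝ} (hX : MemLp X 4 μ) :
    variance (X ^ 2) μ = fourthCumulant X μ + 2 * μ[X ^ 2] ^ 2 := by
  have hX4 : Integrable (fun ω => X ω ^ 4) μ :=
    MemLp.integrable_pow_of_le (p := 4) (by simpa using hX) le_rfl
  have hX2 : MemLp (X ^ 2) 2 μ := (memLp_two_iff_integrable_sq (hX.1.pow 2)).2 <| by
    simpa only [Pi.pow_apply, ← pow_mul, Nat.reduceMul] using hX4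
  rw [variance_eq_sub hX2, fourthCumulant, ← pow_mul]
  ring

variable {ι : Type*} {X : ι → Ω → ℝ}

lemma integral_finsetSum_sq_of_indepFun (s : Finset ι) (hX : ∀ i, MemLp (X i) 2 μ)
    (h0 : ∀ i, μ[X i] = 0)
    (hindep : ∀ (t : Finset ι) (i : ι), i ∉ t → IndepFun (∑ j ∈ t, X j) (X i) μ) :
    μ[(∑ i ∈ s, X i) ^ 2] = ∑ i ∈ s, μ[X i ^ 2] := by
  classical
  induction s using Finset.induction_on with
  | empty => simp
  | insert i s hi ih =>
    rw [sum_insert hi, sum_insert hi, add_comm, (hindep s i hi).integral_add_sq_of_integral_eq_zero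
      (memLp_finsetSum' s fun j _ => hX j) (hX i)
      (integral_finsetSum_of_integral_eq_zero s (fun j => (hX j).integrable one_le_two) h0) (h0 i),
      ih, add_comm]

lemma fourthCumulant_finsetSum_of_indepFun (s : Finset ι) (hX : ∀ i, MemLp (X i) 4 μ)
    (h0 : ∀ i, μ[X i] = 0)
    (hindep : ∀ (t : Finset ι) (i : ι), i ∉ t → IndepFun (∑ j ∈ t, X j) (X i) μ) :
    fourthCumulant (∑ i ∈ s, X i) μ = ∑ i ∈ s, fourthCumulant (X i) μ := by
  classical
  induction s using Finset.induction_on with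
  | empty => simp [fourthCumulant]
  | insert i s hi ih =>
    rw [sum_insert hi, sum_insert hi, add_comm, (hindep s i hi).fourthCumulant_add
      (memLp_finsetSum' s fun j _ => hX j) (hX i)
      (integral_finsetSum_of_integral_eq_zero s (fun j => (hX j).integrable (by norm_num)) h0)
      (h0 i), ih, add_comm]

end Centred

lemma iIndepFun.indepFun_finsetSum_comp_of_notMem {ι β γ : Type*} [MeasurableSpace β]
    [AddCommMonoid γ] [MeasurableSpace γ] [MeasurableAdd₂ γ] {f g : ι → Ω → β}
    (h : iIndepFun (Sum.elim f g) μ) (hf : ∀ i, Measurable (f i)) (hg : ∀ i, Measurable (g i))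
    {F : β → β → γ} (hF : Measurable (Function.uncurry F)) {s : Finset ι} {i : ι} (hi : i ∉ s) :
    IndepFun (∑ j ∈ s, fun ω => F (f j ω) (g j ω)) (fun ω => F (f i ω) (g i ω)) μ := by
  classical
  have hmeas : ∀ k, Measurable (Sum.elim f g k) := by
    rintro (k | k)
    exacts [hf k, hg k]
  have hdisj : Disjoint (s.disjSum s) {Sum.inl i, Sum.inr i} := by
    simp [Finset.disjoint_left, hi]
  have hF₂ (T : Finset (ι ⊕ ι)) (a b : T) : Measurable fun t : T → β => F (t a) (t b) :=
    hF.comp (f := fun t : T → β => (t a, t b))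
      ((measurable_pi_apply a).prodMk (measurable_pi_apply b))
  have key := (h.indepFun_finset _ _ hdisj hmeas).comp
    (Finset.measurable_sum s.attach fun j _ =>
      hF₂ (s.disjSum s) ⟨Sum.inl j.1, by simp⟩ ⟨Sum.inr j.1, by simp⟩)
    (hF₂ {Sum.inl i, Sum.inr i} ⟨Sum.inl i, by simp⟩ ⟨Sum.inr i, by simp⟩)
  convert key using 1
  · ext ω
    simp only [Finset.sum_apply, Function.comp_apply, Sum.elim_inl, Sum.elim_inr]
    exact (Finset.sum_attach s fun j => F (f j ω) (g j ω)).symm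
  · rfl

lemma integral_eq_zero_of_rademacher [IsProbabilityMeasure μ] {ε : Ω → ℝ} (hε : Measurable ε)
    (hval : ∀ ω, ε ω = 1 ∨ ε ω = -1) (hhalf : μ {ω | ε ω = 1} = 1 / 2) : μ[ε] = 0 := by
  have hs : MeasurableSet {ω | ε ω = 1} := hε (measurableSet_singleton 1)
  have hind : ε = fun ω => {ω | ε ω = 1}.indicator (fun _ => (2 : ℝ)) ω - 1 := by
    ext ω
    rcases hval ω with h | h <;> simp [Set.indicator, h] <;> norm_num
  rw [hind, integral_sub ((integrable_const 2).indicator hs) (integrable_const 1),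
    integral_indicator_const _ hs, measureReal_def, hhalf]
  norm_num

lemma IndepFun.integral_mul_eq_zero_of_rademacher [IsProbabilityMeasure μ] {ε X : Ω → ℝ}
    (hεX : IndepFun ε X μ) (hε : Measurable ε) (hX : AEStronglyMeasurable X μ)
    (hval : ∀ ω, ε ω = 1 ∨ ε ω = -1) (hhalf : μ {ω | ε ω = 1} = 1 / 2) : μ[ε * X] = 0 := by
  rw [hεX.integral_mul_eq_mul_integral hε.aestronglyMeasurable hX,
    integral_eq_zero_of_rademacher hε hval hhalf, zero_mul]

section RademacherTimesPoisson
variable {ε : Ω → ℝ} {N : Ω → ℕ} {r : ℝ≥0}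

lemma HasLaw.integral_sq_mul_natCast_of_poisson (hN : HasLaw N Po(r) μ)
    (hε : ∀ ω, ε ω ^ 2 = 1) : μ[(ε * fun ω => (N ω : ℝ)) ^ 2] = (r : ℝ) ^ 2 + r := by
  rw [mul_pow_of_sq_eq_one hε even_two]
  exact hN.integral_natCast_sq_of_poisson

lemma HasLaw.fourthCumulant_mul_natCast_of_poisson (hN : HasLaw N Po(r) μ)
    (hε : ∀ ω, ε ω ^ 2 = 1) :
    fourthCumulant (ε * fun ω => (N ω : ℝ)) μ = r + 4 * (r : ℝ) ^ 2 - 2 * (r : ℝ) ^ 4 := by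
  have hN4 : μ[(fun ω => (N ω : ℝ)) ^ 4] = _ := hN.integral_natCast_pow_four_of_poisson
  rw [fourthCumulant, hN.integral_sq_mul_natCast_of_poisson hε,
    mul_pow_of_sq_eq_one hε (by decide), hN4]
  ring

end RademacherTimesPoisson

end ProbabilityTheory

lemma poisson_sketch_moment_sum_le {α : Type*} [Fintype α] (q : α → ℝ) (hq0 : ∀ x, 0 ≤ q x)
    (hq1 : ∑ x, q x = 1) (m : ℝ) (hm : 0 ≤ m) :
    ∑ x, (m * q x + 4 * (m * q x) ^ 2 - 2 * (m * q x) ^ 4)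
        + 2 * (∑ x, ((m * q x) ^ 2 + m * q x)) ^ 2
      ≤ 3 * m + 20 * m ^ 2 + 16 * m ^ 3 * (∑ x, (q x) ^ 2)
        + 2 * m ^ 4 * (∑ x, (q x) ^ 2) ^ 2 := by
  set C := ∑ x, q x ^ 2
  have hC0 : 0 ≤ C := sum_nonneg fun x _ => sq_nonneg (q x)
  have hC1 : C ≤ 1 := hq1 ▸ sum_le_sum fun x _ => by
    have hqx : q x ≤ 1 := hq1 ▸ single_le_sum (fun y _ => hq0 y) (mem_univ x)
    nlinarith [hq0 x]
  have hlin : ∑ x, m * q x = m := by rw [← mul_sum, hq1, mul_one]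
  have hsq : ∑ x, (m * q x) ^ 2 = m ^ 2 * C := by simp_rw [mul_pow]; rw [← mul_sum]
  have hκ : ∑ x, (m * q x + 4 * (m * q x) ^ 2 - 2 * (m * q x) ^ 4) ≤ m + 4 * (m ^ 2 * C) :=
    calc _ ≤ ∑ x, (m * q x + 4 * (m * q x) ^ 2) :=
          sum_le_sum fun x _ => by nlinarith [pow_nonneg (mul_nonneg hm (hq0 x)) 4]
      _ = m + 4 * (m ^ 2 * C) := by rw [sum_add_distrib, ← mul_sum _ _ 4, hsq, hlin]
  rw [sum_add_distrib, hsq, hlin]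
  nlinarith [mul_nonneg (mul_nonneg hm hm) (sub_nonneg.2 hC1), mul_nonneg (pow_nonneg hm 3) hC0]

/-- Let `q` be a pmf on a finite type `α`, `m > 0`, let `(M_x)` be
independent with `M_x ~ Poisson(m · q_x)`, and `(h_x)` independent uniform on `{-1, +1}`,
with the whole family `(M_x, h_x)_{x}` mutually independent. For `V = Σ_x h_x · M_x`,
`Var[V²] ≤ 3m + 20m² + 16m³ · C(q) + 2m⁴ · C(q)²` where `C(q) = Σ_x q_x²`. -/
theorem hashed_poissonized_sketch_variance_bound
    {Ω : Type*} {mΩ : MeasurableSpace Ω} (μ : Measure Ω) [IsProbabilityMeasure μ]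
    {α : Type*} [Fintype α]
    (q : α → ℝ) (hq0 : ∀ x, 0 ≤ q x) (hq1 : ∑ x, q x = 1)
    (m : ℝ) (hm : 0 < m)
    (M : α → Ω → ℕ) (h : α → Ω → ℝ)
    (hMmeas : ∀ x, Measurable (M x)) (hhmeas : ∀ x, Measurable (h x))
    (hval : ∀ x ω, h x ω = 1 ∨ h x ω = -1)
    (hunif : ∀ x, μ {ω | h x ω = 1} = 1 / 2)
    (hMlaw : ∀ x (n : ℕ), μ {ω | M x ω = n}
      = ENNReal.ofReal (Real.exp (-(m * q x)) * (m * q x) ^ n / n.factorial))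
    (hindep : iIndepFun
      (Sum.elim (fun x ω => ((M x ω : ℝ))) h) μ) :
    variance (fun ω => (∑ x, h x ω * (M x ω : ℝ)) ^ 2) μ
      ≤ 3 * m + 20 * m ^ 2 + 16 * m ^ 3 * (∑ x, (q x) ^ 2)
        + 2 * m ^ 4 * (∑ x, (q x) ^ 2) ^ 2 := by
  set N : α → Ω → ℝ := fun x ω => (M x ω : ℝ)
  set W : α → Ω → ℝ := fun x => h x * N x
  have hNmeas (x : α) : Measurable (N x) := (measurable_of_countable _).comp (hMmeas x)
  have hrate (x : α) : ((m * q x).toNNReal : ℝ) = m * q x :=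
    Real.coe_toNNReal _ (mul_nonneg hm.le (hq0 x))
  have hlaw (x : α) : HasLaw (M x) Po((m * q x).toNNReal) μ :=
    hasLaw_poissonMeasure_of_measure_eq (hMmeas x) (by simpa only [hrate] using hMlaw x)
  have hsq (x : α) (ω : Ω) : h x ω ^ 2 = 1 := by rcases hval x ω with e | e <;> simp [e]
  have hW4 (x : α) : MemLp (W x) 4 μ :=
    (hlaw x).memLp_four_natCast_of_poisson.mul_of_sq_eq_one (hhmeas x).aestronglyMeasurable (hsq x)
  have hW0 (x : α) : μ[W x] = 0 :=
    (hindep.indepFun (i := .inr x) (j := .inl x) (by simp)).integral_mul_eq_zero_of_rademacher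
      (hhmeas x) (hNmeas x).aestronglyMeasurable (hval x) (hunif x)
  have hWindep (s : Finset α) (x : α) (hx : x ∉ s) : IndepFun (∑ j ∈ s, W j) (W x) μ :=
    hindep.indepFun_finsetSum_comp_of_notMem hNmeas hhmeas (F := fun a e => e * a) (by fun_prop) hx
  have hV : (fun ω => (∑ x, h x ω * (M x ω : ℝ)) ^ 2) = (∑ x, W x) ^ 2 := by
    ext ω
    simp [W, N]
  have hκ (x : α) : fourthCumulant (W x) μ = _ :=
    (hlaw x).fourthCumulant_mul_natCast_of_poisson (hsq x)
  have hW2 (x : α) : μ[W x ^ 2] = _ := (hlaw x).integral_sq_mul_natCast_of_poisson (hsq x)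
  rw [hV, variance_sq_eq_fourthCumulant_add (memLp_finsetSum' _ fun x _ => hW4 x),
    fourthCumulant_finsetSum_of_indepFun _ hW4 hW0 hWindep,
    integral_finsetSum_sq_of_indepFun _ (fun x => (hW4 x).mono_exponent (by norm_num)) hW0 hWindep]
  simp only [hκ, hW2, hrate]
  exact poisson_sketch_moment_sum_le q hq0 hq1 m hm.le
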